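/- Let $\mathcal{D} \in \mathbb{C}^{ns\times ns}$ be block diagonal with invertible $s\times s$ diagonal blocks, $\mathcal{U} \in \mathbb{C}^{ns\times ns}$ block upper triangular with identity diagonal blocks, and $\mathcal{C}$ a block companion matrix (identity blocks on the first block subdiagonal, last block column arbitrary, zeros elsewhere). Then $\mathcal{H} = \mathcal{D}\mathcal{U}\mathcal{C}\mathcal{U}^{-1}\mathcal{D}^{-1}$ is block upper Hessenberg, and its subdiagonal blocks are $H_{k+1,k} = D_{k+1} D_k^{-1}$, where $D_k$ is the $k$-th diagonal block of $\mathcal{D}$. In particular, if each $D_k$ is upper triangular with positive diagonal entries, then so is each $H_{k+1,k}$. -/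

import Mathlib

open Matrix

/-- Block companion matrix with `s×s` blocks, indexed by `Fin n × Fin s`. -/
def blockCompanion (n s : ℕ) (C : Fin n → Matrix (Fin s) (Fin s) ℂ) :
    Matrix (Fin n × Fin s) (Fin n × Fin s) ℂ :=
  fun p q =>
    (if (p.1 : ℕ) = (q.1 : ℕ) + 1 ∧ p.2 = q.2 then 1 else 0) +
      (if (q.1 : ℕ) = n - 1 then C p.1 p.2 q.2 else 0)

/-- Upper triangular with positive (real) diagonal entries. -/
def UpperTriPosDiag {s : ℕ} (M : Matrix (Fin s) (Fin s) ℂ) : Prop :=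
  (∀ i j : Fin s, (j : ℕ) < (i : ℕ) → M i j = 0) ∧
    ∀ i : Fin s, 0 < (M i i).re ∧ (M i i).im = 0

/-!
View an `ns × ns` matrix as an `n × n` matrix over the (noncommutative) ring of `s × s`
matrices (`Matrix.compRingEquiv`). Then `𝒟𝒰` and `𝒰⁻¹𝒟⁻¹` are upper triangular with diagonal
entries `D_k` and `D_k⁻¹`, and `𝒞` is upper Hessenberg with identity subdiagonal. Multiplying an
upper Hessenberg matrix by upper triangular ones on either side keeps it upper Hessenberg and
only multiplies its subdiagonal entry `(k+1, k)` by the diagonal entries in row `k+1` on the left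
and column `k` on the right, which gives `H_{k+1,k} = D_{k+1} D_k⁻¹`.
-/

open scoped ComplexOrder

namespace Matrix

theorem IsUpperTriangular.mul_apply_self {m R : Type*} [LinearOrder m] [Fintype m]
    [NonUnitalNonAssocSemiring R] {A B : Matrix m m R} (hA : A.IsUpperTriangular)
    (hB : B.IsUpperTriangular) (i : m) : (A * B) i i = A i i * B i i := by
  rw [mul_apply]
  refine Fintype.sum_eq_single i fun k hk => ?_
  rcases hk.lt_or_gt with hki | hik
  · rw [hA hki, zero_mul]
  · rw [hB hik, mul_zero]

section Hessenberg

variable {n : ℕ} {R : Type*}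

def IsUpperHessenberg [Zero R] (M : Matrix (Fin n) (Fin n) R) : Prop :=
  ∀ ⦃i j : Fin n⦄, (j : ℕ) + 1 < i → M i j = 0

variable [NonUnitalNonAssocSemiring R] {A M B : Matrix (Fin n) (Fin n) R}

theorem IsUpperTriangular.mul_isUpperHessenberg (hA : A.IsUpperTriangular)
    (hM : M.IsUpperHessenberg) : (A * M).IsUpperHessenberg := by
  intro i j hij
  rw [mul_apply]
  refine Finset.sum_eq_zero fun k _ => ?_
  by_cases hki : k < i
  · rw [hA hki, zero_mul]
  · rw [hM (by omega), mul_zero]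

theorem IsUpperHessenberg.mul_isUpperTriangular (hM : M.IsUpperHessenberg)
    (hB : B.IsUpperTriangular) : (M * B).IsUpperHessenberg := by
  intro i j hij
  rw [mul_apply]
  refine Finset.sum_eq_zero fun k _ => ?_
  by_cases hjk : j < k
  · rw [hB hjk, mul_zero]
  · rw [hM (by omega), zero_mul]

theorem IsUpperTriangular.mul_apply_of_isUpperHessenberg (hA : A.IsUpperTriangular)
    (hM : M.IsUpperHessenberg) {i j : Fin n} (hij : (i : ℕ) = j + 1) :
    (A * M) i j = A i i * M i j := by
  rw [mul_apply]
  refine Fintype.sum_eq_single i fun k hk => ?_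
  rcases hk.lt_or_gt with hki | hik
  · rw [hA hki, zero_mul]
  · rw [hM (by omega), mul_zero]

theorem IsUpperHessenberg.mul_apply_of_isUpperTriangular (hM : M.IsUpperHessenberg)
    (hB : B.IsUpperTriangular) {i j : Fin n} (hij : (i : ℕ) = j + 1) :
    (M * B) i j = M i j * B j j := by
  rw [mul_apply]
  refine Fintype.sum_eq_single j fun k hk => ?_
  rcases hk.lt_or_gt with hkj | hjk
  · rw [hM (by omega), zero_mul]
  · rw [hB hjk, mul_zero]

theorem IsUpperHessenberg.isUpperTriangular_mul_mul (hM : M.IsUpperHessenberg)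
    (hA : A.IsUpperTriangular) (hB : B.IsUpperTriangular) : (A * M * B).IsUpperHessenberg :=
  (hA.mul_isUpperHessenberg hM).mul_isUpperTriangular hB

theorem IsUpperHessenberg.isUpperTriangular_mul_mul_apply (hM : M.IsUpperHessenberg)
    (hA : A.IsUpperTriangular) (hB : B.IsUpperTriangular) {i j : Fin n} (hij : (i : ℕ) = j + 1) :
    (A * M * B) i j = A i i * M i j * B j j := by
  rw [(hA.mul_isUpperHessenberg hM).mul_apply_of_isUpperTriangular hB hij,
    hA.mul_apply_of_isUpperHessenberg hM hij]

end Hessenberg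

theorem isUpperTriangular_comp_symm_iff {ι α R : Type*} [LT ι] [Zero R]
    {M : Matrix (ι × α) (ι × α) R} :
    ((comp ι ι α α R).symm M).IsUpperTriangular ↔ M.BlockTriangular Prod.fst :=
  ⟨fun h p q hpq => congrFun (congrFun (h hpq) p.2) q.2,
    fun h i j hij => ext fun a b => h (show (j, b).1 < (i, a).1 from hij)⟩

variable {ι α R : Type*} [Fintype ι] [DecidableEq ι] [Fintype α] [DecidableEq α] [CommRing R]

theorem inv_compRingEquiv_diagonal {d : ι → Matrix α α R} (hd : ∀ i, IsUnit (d i)) :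
    (compRingEquiv ι α R (diagonal d))⁻¹ = compRingEquiv ι α R (diagonal fun i => (d i)⁻¹) := by
  refine inv_eq_right_inv ?_
  rw [← map_mul, diagonal_mul_diagonal, ← map_one (compRingEquiv ι α R), ← diagonal_one]
  congr 2
  ext1 i
  exact mul_nonsing_inv _ ((isUnit_iff_isUnit_det _).mp (hd i))

variable [LinearOrder ι] {U : Matrix (ι × α) (ι × α) R}

theorem det_eq_one_of_compRingEquiv_symm (hU : ((compRingEquiv ι α R).symm U).IsUpperTriangular)
    (hU1 : ∀ i, (compRingEquiv ι α R).symm U i i = 1) : U.det = 1 := by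
  rw [(isUpperTriangular_comp_symm_iff.mp hU).det_fintype]
  refine Finset.prod_eq_one fun k _ => ?_
  have hk : U.toSquareBlock Prod.fst k = 1 := by
    ext ⟨⟨i, a⟩, hi⟩ ⟨⟨j, b⟩, hj⟩
    simp only at hi hj
    subst hi hj
    simpa [toSquareBlock_def, one_apply] using congrFun (congrFun (hU1 j) a) b
  rw [hk, det_one]

theorem isUpperTriangular_compRingEquiv_symm_inv
    (hU : ((compRingEquiv ι α R).symm U).IsUpperTriangular)
    (hU1 : ∀ i, (compRingEquiv ι α R).symm U i i = 1) :
    ((compRingEquiv ι α R).symm U⁻¹).IsUpperTriangular := by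
  have : Invertible U := invertibleOfIsUnitDet _ <| by
    rw [det_eq_one_of_compRingEquiv_symm hU hU1]
    exact isUnit_one
  exact isUpperTriangular_comp_symm_iff.mpr <| blockTriangular_inv_of_blockTriangular <|
    isUpperTriangular_comp_symm_iff.mp hU

theorem compRingEquiv_symm_inv_apply_self
    (hU : ((compRingEquiv ι α R).symm U).IsUpperTriangular)
    (hU1 : ∀ i, (compRingEquiv ι α R).symm U i i = 1) (i : ι) :
    (compRingEquiv ι α R).symm U⁻¹ i i = 1 := by
  have hUinv := isUpperTriangular_compRingEquiv_symm_inv hU hU1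
  have hUU : U * U⁻¹ = 1 :=
    mul_nonsing_inv _ <| by rw [det_eq_one_of_compRingEquiv_symm hU hU1]; exact isUnit_one
  have hii := congrFun (congrFun (congrArg (compRingEquiv ι α R).symm hUU) i) i
  rwa [map_mul, map_one, hU.mul_apply_self hUinv, hU1, one_mul, one_apply_eq] at hii

end Matrix

section BlockCompanion

variable {n s : ℕ} (C : Fin n → Matrix (Fin s) (Fin s) ℂ)

theorem isUpperHessenberg_blockCompanion :
    ((compRingEquiv (Fin n) (Fin s) ℂ).symm (blockCompanion n s C)).IsUpperHessenberg := by
  intro i j hij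
  ext a b
  have hij' : (i : ℕ) ≠ j + 1 := by omega
  have hj : (j : ℕ) ≠ n - 1 := by omega
  simp [blockCompanion, hij', hj]

theorem compRingEquiv_symm_blockCompanion_apply_succ {k : Fin n} (hk : (k : ℕ) + 1 < n) :
    (compRingEquiv (Fin n) (Fin s) ℂ).symm (blockCompanion n s C) ⟨k + 1, hk⟩ k = 1 := by
  ext a b
  have hk' : (k : ℕ) ≠ n - 1 := by omega
  simp [blockCompanion, hk', one_apply]

end BlockCompanion

section UpperTriPosDiag

variable {s : ℕ} {A B : Matrix (Fin s) (Fin s) ℂ}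

theorem upperTriPosDiag_iff : UpperTriPosDiag A ↔ A.IsUpperTriangular ∧ ∀ i, 0 < A i i := by
  simp only [UpperTriPosDiag, Complex.pos_iff, eq_comm (a := (0 : ℝ))]
  exact Iff.rfl

theorem UpperTriPosDiag.mul (hA : UpperTriPosDiag A) (hB : UpperTriPosDiag B) :
    UpperTriPosDiag (A * B) := by
  obtain ⟨hAt, hApos⟩ := upperTriPosDiag_iff.mp hA
  obtain ⟨hBt, hBpos⟩ := upperTriPosDiag_iff.mp hB
  refine upperTriPosDiag_iff.mpr ⟨hAt.mul hBt, fun i => ?_⟩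
  rw [hAt.mul_apply_self hBt]
  exact mul_pos (hApos i) (hBpos i)

theorem UpperTriPosDiag.inv (hA : UpperTriPosDiag A) : UpperTriPosDiag A⁻¹ := by
  obtain ⟨hAt, hApos⟩ := upperTriPosDiag_iff.mp hA
  have : Invertible A := invertibleOfIsUnitDet _ <| by
    rw [det_of_isUpperTriangular hAt]
    exact (Finset.prod_ne_zero_iff.mpr fun i _ => (hApos i).ne').isUnit
  have hAinvt := blockTriangular_inv_of_blockTriangular hAt
  refine upperTriPosDiag_iff.mpr ⟨hAinvt, fun i => ?_⟩
  have hii : A i i * A⁻¹ i i = 1 := by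
    rw [← hAt.mul_apply_self hAinvt, mul_inv_of_invertible, one_apply_eq]
  rw [eq_inv_of_mul_eq_one_right hii]
  exact inv_pos.mpr (hApos i)

end UpperTriPosDiag

theorem DUC_block_hessenberg {n s : ℕ}
    (Dblk : Fin n → Matrix (Fin s) (Fin s) ℂ)
    (hDblk : ∀ i, IsUnit (Dblk i))
    (D : Matrix (Fin n × Fin s) (Fin n × Fin s) ℂ)
    (hD : D = fun p q => if p.1 = q.1 then Dblk p.1 p.2 q.2 else 0)
    (U : Matrix (Fin n × Fin s) (Fin n × Fin s) ℂ)
    (hUtri : ∀ p q : Fin n × Fin s, (q.1 : ℕ) < (p.1 : ℕ) → U p q = 0)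
    (hUdiag : ∀ (i : Fin n) (a b : Fin s),
      U (i, a) (i, b) = if a = b then 1 else 0)
    (C : Fin n → Matrix (Fin s) (Fin s) ℂ)
    (H : Matrix (Fin n × Fin s) (Fin n × Fin s) ℂ)
    (hH : H = D * U * blockCompanion n s C * U⁻¹ * D⁻¹) :
    (∀ p q : Fin n × Fin s, (q.1 : ℕ) + 1 < (p.1 : ℕ) → H p q = 0) ∧
      (∀ (k : Fin n) (hk : (k : ℕ) + 1 < n) (a b : Fin s),
        H (⟨(k : ℕ) + 1, hk⟩, a) (k, b) =
          (Dblk ⟨(k : ℕ) + 1, hk⟩ * (Dblk k)⁻¹) a b) ∧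
      ((∀ i, UpperTriPosDiag (Dblk i)) →
        ∀ (k : Fin n) (hk : (k : ℕ) + 1 < n),
          UpperTriPosDiag (Dblk ⟨(k : ℕ) + 1, hk⟩ * (Dblk k)⁻¹)) := by
  set e := compRingEquiv (Fin n) (Fin s) ℂ
  have hDe : D = e (diagonal Dblk) := by
    rw [hD]
    ext p q
    by_cases hpq : p.1 = q.1 <;> simp [e, hpq]
  have hDinv : D⁻¹ = e (diagonal fun i => (Dblk i)⁻¹) := by
    rw [hDe]
    exact inv_compRingEquiv_diagonal hDblk
  have hUt : (e.symm U).IsUpperTriangular := isUpperTriangular_comp_symm_iff.mpr hUtri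
  have hU1 (i : Fin n) : e.symm U i i = 1 := ext fun a b => (hUdiag i a b).trans (one_apply ..).symm
  have hV1 (i : Fin n) : e.symm U⁻¹ i i = 1 := compRingEquiv_symm_inv_apply_self hUt hU1 i
  have hHe : e.symm H = (diagonal Dblk * e.symm U) * e.symm (blockCompanion n s C) *
      (e.symm U⁻¹ * diagonal fun i => (Dblk i)⁻¹) := by
    rw [hH, hDinv, hDe]
    simp only [map_mul, RingEquiv.symm_apply_apply, mul_assoc]
  have hLt : (diagonal Dblk * e.symm U).IsUpperTriangular := (blockTriangular_diagonal _).mul hUt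
  have hRt : (e.symm U⁻¹ * diagonal fun i => (Dblk i)⁻¹).IsUpperTriangular :=
    (isUpperTriangular_compRingEquiv_symm_inv hUt hU1).mul (blockTriangular_diagonal _)
  have hCh := isUpperHessenberg_blockCompanion C
  refine ⟨fun p q hpq => ?_, fun k hk a b => ?_, fun hpos k hk => (hpos _).mul (hpos k).inv⟩
  · change e.symm H p.1 q.1 p.2 q.2 = 0
    rw [hHe, hCh.isUpperTriangular_mul_mul hLt hRt hpq, Matrix.zero_apply]
  · change e.symm H ⟨k + 1, hk⟩ k a b = _
    rw [hHe, hCh.isUpperTriangular_mul_mul_apply hLt hRt rfl,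
      compRingEquiv_symm_blockCompanion_apply_succ]
    simp [hU1, hV1]
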